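/- Let n be a positive integer and s an integer such that n does not divide 4s. Then V_s is a two-dimensional irreducible invariant subspace for the regular representation of the dihedral quandle R_n: every ℂ-subspace U ⊆ V_s satisfying λ_t(U) ⊆ U for all t ∈ ZMod n equals {0} or V_s. -/

import Mathlib

/-- The regular representation of the dihedral quandle `R_n = Quandle.dihedral n`
(`ZMod n` with `x ◃ y = 2y - x`) on functions `ZMod n → ℂ`:
`(λ_t f)(x) = f (2t - x)`. -/
def lam (n : ℕ) (t : ZMod n) (f : ZMod n → ℂ) : ZMod n → ℂ :=
  fun x => f (2 * t - x)

/-- `ω = exp(2πi/n)`. -/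
noncomputable def dihedralOmega (n : ℕ) : ℂ :=
  Complex.exp (2 * Real.pi * Complex.I / n)

/-- The character `f_s : ZMod n → ℂ`, `f_s(x) = ω^{s·x.val}`. -/
noncomputable def chi (n : ℕ) (s : ℤ) : ZMod n → ℂ :=
  fun x => dihedralOmega n ^ (s * (x.val : ℤ))

/-- `V_s`: the `ℂ`-linear span of `{f_s, f_{-s}}` in `ZMod n → ℂ`. -/
noncomputable def Vsub (n : ℕ) (s : ℤ) : Submodule ℂ (ZMod n → ℂ) :=
  Submodule.span ℂ {chi n s, chi n (-s)}

/-! `λ_0` swaps `f_s` and `f_{-s}`, while `λ_0 ∘ λ_1` is diagonal on them with eigenvalues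
`ω^{2s}` and `ω^{-2s}`, which differ because `n ∤ 4s`. Applying `λ_0 ∘ λ_1 - ω^{∓2s}` to a nonzero
element of an invariant `U ⊆ V_s` isolates a nonzero multiple of `f_s` or of `f_{-s}`, and `λ_0`
then supplies the other one. Evaluating at `0` and `1` shows that `f_s, f_{-s}` are independent,
as `ω^s ≠ ω^{-s}`. -/

theorem Submodule.eq_bot_or_eq_span_pair_of_swap_of_eigenvectors {K V : Type*} [Field K]
    [AddCommGroup V] [Module K V] {v w : V} {μ ν : K} (hμν : μ ≠ ν) (S T : V →ₗ[K] V)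
    (hSv : S v = w) (hSw : S w = v) (hTv : T v = μ • v) (hTw : T w = ν • w)
    {U : Submodule K V} (hU : U ≤ span K {v, w}) (hSU : ∀ f ∈ U, S f ∈ U)
    (hTU : ∀ f ∈ U, T f ∈ U) : U = ⊥ ∨ U = span K {v, w} := by
  refine or_iff_not_imp_left.mpr fun hU0 => le_antisymm hU ?_
  obtain ⟨g, hgU, hg0⟩ := exists_mem_ne_zero_of_ne_bot hU0
  obtain ⟨a, b, rfl⟩ := mem_span_pair.mp (hU hgU)
  have hav : (a * (μ - ν)) • v ∈ U := by
    convert U.sub_mem (hTU _ hgU) (U.smul_mem ν hgU) using 1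
    simp only [map_add, map_smul, hTv, hTw]
    module
  have hbw : (b * (ν - μ)) • w ∈ U := by
    convert U.sub_mem (hTU _ hgU) (U.smul_mem μ hgU) using 1
    simp only [map_add, map_smul, hTv, hTw]
    module
  have hvw : v ∈ U ∨ w ∈ U := by
    by_cases ha : a = 0
    · have hb : b ≠ 0 := by rintro rfl; simp [ha] at hg0
      exact .inr ((U.smul_mem_iff (mul_ne_zero hb (sub_ne_zero.mpr hμν.symm))).mp hbw)
    · exact .inl ((U.smul_mem_iff (mul_ne_zero ha (sub_ne_zero.mpr hμν))).mp hav)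
  rw [span_le, Set.insert_subset_iff, Set.singleton_subset_iff]
  rcases hvw with hv | hw
  · exact ⟨hv, hSv ▸ hSU v hv⟩
  · exact ⟨hSw ▸ hSU w hw, hw⟩

section DihedralCharacters

variable {n : ℕ}

lemma dihedralOmega_zpow_eq_zpow_iff (hn : n ≠ 0) {j k : ℤ} :
    dihedralOmega n ^ j = dihedralOmega n ^ k ↔ (j : ZMod n) = k := by
  have hω : dihedralOmega n ≠ 0 := Complex.exp_ne_zero _
  rw [ZMod.intCast_eq_intCast_iff_dvd_sub, eq_comm,
    ← (Complex.isPrimitiveRoot_exp n hn).zpow_eq_one_iff_dvd, ← dihedralOmega, zpow_sub₀ hω,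
    div_eq_one_iff_eq (zpow_ne_zero _ hω)]

lemma chi_intCast (hn : n ≠ 0) (s k : ℤ) : chi n s k = dihedralOmega n ^ (s * k) := by
  have : NeZero n := ⟨hn⟩
  rw [chi, dihedralOmega_zpow_eq_zpow_iff hn]
  push_cast [ZMod.natCast_val, ZMod.intCast_cast, ZMod.cast_id]
  rfl

lemma lam_intCast_chi (hn : n ≠ 0) (s k : ℤ) :
    lam n k (chi n s) = dihedralOmega n ^ (2 * s * k) • chi n (-s) := by
  funext x
  obtain ⟨m, rfl⟩ := ZMod.intCast_surjective x
  have hω : dihedralOmega n ≠ 0 := Complex.exp_ne_zero _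
  rw [lam, Pi.smul_apply, smul_eq_mul, show 2 * (k : ZMod n) - m = ((2 * k - m : ℤ) : ZMod n) by
    push_cast; ring, chi_intCast hn, chi_intCast hn, ← zpow_add₀ hω]
  ring_nf

lemma lam_zero_chi (hn : n ≠ 0) (s : ℤ) : lam n 0 (chi n s) = chi n (-s) := by
  simpa using lam_intCast_chi hn s 0

lemma lam_zero_lam_one_chi (hn : n ≠ 0) (s : ℤ) :
    lam n 0 (lam n 1 (chi n s)) = dihedralOmega n ^ (2 * s) • chi n s := by
  have h1 : lam n 1 (chi n s) = dihedralOmega n ^ (2 * s) • chi n (-s) := by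
    simpa using lam_intCast_chi hn s 1
  rw [h1]
  change dihedralOmega n ^ (2 * s) • lam n 0 (chi n (-s)) = _
  rw [lam_zero_chi hn, neg_neg]

lemma dihedralOmega_zpow_ne_zpow_neg (hn : n ≠ 0) {k : ℤ} (hk : ¬ (n : ℤ) ∣ 2 * k) :
    dihedralOmega n ^ k ≠ dihedralOmega n ^ (-k) := by
  rw [Ne, dihedralOmega_zpow_eq_zpow_iff hn, ZMod.intCast_eq_intCast_iff_dvd_sub]
  ring_nf
  simpa [mul_comm, dvd_neg] using hk

lemma linearIndependent_chi_pair (hn : n ≠ 0) {s : ℤ} (hs : ¬ (n : ℤ) ∣ 2 * s) :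
    LinearIndependent ℂ ![chi n s, chi n (-s)] := by
  refine LinearIndependent.pair_iff.mpr fun a b hab => ?_
  have h0 := congrFun hab ((0 : ℤ) : ZMod n)
  have h1 := congrFun hab ((1 : ℤ) : ZMod n)
  simp only [Pi.add_apply, Pi.smul_apply, smul_eq_mul, chi_intCast hn, Pi.zero_apply, mul_zero,
    zpow_zero, mul_one] at h0 h1
  have hb : b = -a := by linear_combination h0
  subst hb
  have ha : a * (dihedralOmega n ^ s - dihedralOmega n ^ (-s)) = 0 := by linear_combination h1
  have ha0 : a = 0 :=
    (mul_eq_zero.mp ha).resolve_right (sub_ne_zero.mpr (dihedralOmega_zpow_ne_zpow_neg hn hs))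
  simp [ha0]

end DihedralCharacters

/-- If `n` does not divide `4s`, then `V_s` is a two-dimensional irreducible
invariant subspace of the regular representation of the dihedral quandle `R_n`:
every subspace `U ⊆ V_s` invariant under all `λ_t` is `⊥` or `V_s`. -/
theorem Vs_irreducible (n : ℕ) (s : ℤ) (hpos : 0 < n) (hndvd : ¬ ((n : ℤ) ∣ 4 * s)) :
    Module.finrank ℂ (Vsub n s) = 2 ∧
    (∀ U : Submodule ℂ (ZMod n → ℂ), U ≤ Vsub n s →
      (∀ t : ZMod n, ∀ f ∈ U, lam n t f ∈ U) → U = ⊥ ∨ U = Vsub n s) := by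
  have hn : n ≠ 0 := hpos.ne'
  have h2s : ¬ (n : ℤ) ∣ 2 * s := fun h => hndvd (by simpa [← mul_assoc] using h.mul_left 2)
  have hμν : dihedralOmega n ^ (2 * s) ≠ dihedralOmega n ^ (2 * -s) := by
    rw [mul_neg]
    exact dihedralOmega_zpow_ne_zpow_neg hn (by convert hndvd using 2; ring)
  let swap := LinearMap.funLeft ℂ ℂ fun x : ZMod n => 2 * 0 - x
  let diag := swap ∘ₗ LinearMap.funLeft ℂ ℂ fun x : ZMod n => 2 * 1 - x
  refine ⟨?_, fun U hU hinv => ?_⟩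
  · rw [Vsub, ← Matrix.range_cons_cons_empty _ _ ![], finrank_span_eq_card
      (linearIndependent_chi_pair hn h2s), Fintype.card_fin]
  · exact Submodule.eq_bot_or_eq_span_pair_of_swap_of_eigenvectors hμν swap diag
      (lam_zero_chi hn s) ((lam_zero_chi hn (-s)).trans (congrArg (chi n) (neg_neg s)))
      (lam_zero_lam_one_chi hn s) (lam_zero_lam_one_chi hn (-s)) hU (hinv 0)
      fun f hf => hinv 0 _ (hinv 1 f hf)
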